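/- arXiv:2103.14126 — 2 statements merged into one kernel-verified Lean document; each statement's English description precedes it below -/
import Mathlib

section
/- Let (p_i)_{i=1}^n and (q_j)_{j=1}^m be two PVMs in a C*-algebra A with a state φ, set ‖x‖_φ = √(φ(x*x)), and define a_i = Σ_j q_j p_i q_j. Then Σ_{i,j} ‖p_i q_j − q_j p_i‖_φ² = Σ_i ‖p_i − a_i‖_φ² + (1 − φ(Σ_i a_i²)). -/
open scoped ComplexOrder
/-- For two PVMs `(p_i)`, `(q_j)` in a C*-algebra with a state `φ`, with
`a_i = Σ_j q_j p_i q_j`: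
`Σ_{i,j} ‖p_i q_j − q_j p_i‖_φ² = Σ_i ‖p_i − a_i‖_φ² + (1 − φ(Σ_i a_i²))`. -/
theorem stmt4 {A : Type*} [CStarAlgebra A] (φ : A →ₗ[ℂ] ℂ)
    (hφ_pos : ∀ x : A, 0 ≤ φ (star x * x)) (hφ_one : φ 1 = 1)
    (n m : ℕ) (p : Fin n → A) (q : Fin m → A)
    (hp_sa : ∀ i, IsSelfAdjoint (p i)) (hp_idem : ∀ i, p i * p i = p i)
    (hp_sum : ∑ i, p i = 1)
    (hq_sa : ∀ j, IsSelfAdjoint (q j)) (hq_idem : ∀ j, q j * q j = q j)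
    (hq_sum : ∑ j, q j = 1)
    (a : Fin n → A) (ha : ∀ i, a i = ∑ j, q j * p i * q j) :
    ∑ i, ∑ j, (φ (star (p i * q j - q j * p i) * (p i * q j - q j * p i))).re =
      ∑ i, (φ (star (p i - a i) * (p i - a i))).re + (1 - (φ (∑ i, a i * a i)).re) := by
  have ha_sa : ∀ i, star (a i) = a i := by
    intro i
    simp [ha, star_sum, star_mul, (hp_sa i).star_eq, fun j => (hq_sa j).star_eq, mul_assoc]
  have key1 : ∀ i, ∑ j, star (p i * q j - q j * p i) * (p i * q j - q j * p i)
      = p i + a i - a i * p i - p i * a i := by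
    intro i
    have h1 : ∀ j, star (p i * q j - q j * p i) * (p i * q j - q j * p i)
        = q j * p i * q j - q j * p i * q j * p i - p i * (q j * p i * q j) + p i * q j * p i := by
      intro j
      have hp2 : ∀ x : A, p i * (p i * x) = p i * x := fun x => by rw [← mul_assoc, hp_idem i]
      have hq2 : ∀ x : A, q j * (q j * x) = q j * x := fun x => by rw [← mul_assoc, hq_idem j]
      simp only [star_sub, star_mul, (hp_sa i).star_eq, (hq_sa j).star_eq, sub_mul, mul_sub,
        mul_assoc, hp2, hq2]
      abel
    calc ∑ j, star (p i * q j - q j * p i) * (p i * q j - q j * p i)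
        = ∑ j, (q j * p i * q j - q j * p i * q j * p i
            - p i * (q j * p i * q j) + p i * q j * p i) :=
          Finset.sum_congr rfl fun j _ => h1 j
      _ = p i + a i - a i * p i - p i * a i := by
          rw [Finset.sum_add_distrib, Finset.sum_sub_distrib, Finset.sum_sub_distrib,
            ← Finset.sum_mul, ← Finset.mul_sum, ← ha,
            show (∑ j, p i * q j * p i) = p i * (∑ j, q j) * p i by
              rw [Finset.mul_sum, Finset.sum_mul],
            hq_sum, mul_one, hp_idem]
          abel
  have key2 : ∀ i, star (p i - a i) * (p i - a i)
      = p i - p i * a i - a i * p i + a i * a i := by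
    intro i
    rw [star_sub, (hp_sa i).star_eq, ha_sa, sub_mul, mul_sub, mul_sub, hp_idem]
    abel
  have key3 : ∑ i, a i = 1 := by
    calc ∑ i, a i = ∑ i, ∑ j, q j * p i * q j := Finset.sum_congr rfl fun i _ => ha i
      _ = ∑ j, ∑ i, q j * p i * q j := by rw [Finset.sum_comm]
      _ = ∑ j, q j * (∑ i, p i) * q j := Finset.sum_congr rfl fun j _ => by
          simp [Finset.mul_sum, Finset.sum_mul]
      _ = 1 := by simp [hp_sum, hq_idem, hq_sum]
  have L : ∑ i, ∑ j, (φ (star (p i * q j - q j * p i) * (p i * q j - q j * p i))).re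
      = (φ (∑ i, (p i + a i - a i * p i - p i * a i))).re := by
    rw [map_sum, Complex.re_sum]
    exact Finset.sum_congr rfl fun i _ => by rw [← key1, map_sum, Complex.re_sum]
  have R1 : ∑ i, (φ (star (p i - a i) * (p i - a i))).re
      = (φ (∑ i, (p i - p i * a i - a i * p i + a i * a i))).re := by
    rw [map_sum, Complex.re_sum]
    exact Finset.sum_congr rfl fun i _ => by rw [key2]
  have R2 : (1 : ℝ) = (φ (∑ i, a i)).re := by rw [key3, hφ_one]; simp
  rw [L, R1, R2, ← Complex.sub_re, ← map_sub, ← Complex.add_re, ← map_add]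
  congr 2
  rw [← Finset.sum_sub_distrib, ← Finset.sum_add_distrib]
  exact Finset.sum_congr rfl fun i _ => by abel
end

section
/- Let a_1,…,a_n be positive semidefinite d×d matrices. If z achieves the minimum of Tr(z) subject to z ⪰ a_i for all i, and (t_1,…,t_n) achieves the maximum of Σ_i Tr(a_i t_i) over POVMs, then t_i z = t_i a_i and z t_i = a_i t_i for all i, and z = Σ_i t_i a_i = Σ_i a_i t_i. -/
open scoped ComplexOrder
open scoped MatrixOrder

open Matrix in
private lemma trace_nonneg_of_psd {d : ℕ} {A : Matrix (Fin d) (Fin d) ℂ}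
    (hA : A.PosSemidef) : 0 ≤ A.trace := by
  rw [Matrix.trace]
  apply Finset.sum_nonneg
  intro i _
  exact hA.diag_nonneg

open Matrix in
private lemma eq_zero_of_trace_conjTranspose_mul_self {d : ℕ}
    {B : Matrix (Fin d) (Fin d) ℂ} (h : (Bᴴ * B).trace = 0) : B = 0 := by
  have htr : (Bᴴ * B).trace = ((∑ j, ∑ i, Complex.normSq (B i j) : ℝ) : ℂ) := by
    simp only [Matrix.trace, Matrix.diag, Matrix.mul_apply, Matrix.conjTranspose_apply]
    push_cast
    refine Finset.sum_congr rfl fun j _ => Finset.sum_congr rfl fun i _ => ?_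
    rw [RCLike.star_def, Complex.normSq_eq_conj_mul_self]
  rw [htr] at h
  have h0 : (∑ j, ∑ i, Complex.normSq (B i j) : ℝ) = 0 := by exact_mod_cast h
  have hz : ∀ j ∈ Finset.univ, (∑ i, Complex.normSq (B i j) : ℝ) = 0 :=
    (Finset.sum_eq_zero_iff_of_nonneg
      (fun j _ => Finset.sum_nonneg fun i _ => Complex.normSq_nonneg _)).mp h0
  ext i j
  have := (Finset.sum_eq_zero_iff_of_nonneg (fun i _ => Complex.normSq_nonneg (B i j))).mp
    (hz j (Finset.mem_univ j)) i (Finset.mem_univ i)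
  simpa using Complex.normSq_eq_zero.mp this

open Matrix in
private lemma mul_eq_zero_of_psd_trace {d : ℕ} {A B : Matrix (Fin d) (Fin d) ℂ}
    (hA : A.PosSemidef) (hB : B.PosSemidef) (h : (A * B).trace = 0) :
    A * B = 0 ∧ B * A = 0 := by
  set sA := CFC.sqrt A with hsA
  set sB := CFC.sqrt B with hsB
  have hAeq : sA * sA = A := CFC.sqrt_mul_sqrt_self A hA.nonneg
  have hBeq : sB * sB = B := CFC.sqrt_mul_sqrt_self B hB.nonneg
  have hAh : sAᴴ = sA := (CFC.sqrt_nonneg A).posSemidef.isHermitian.eq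
  have hBh : sBᴴ = sB := (CFC.sqrt_nonneg B).posSemidef.isHermitian.eq
  have key : ((sB * sA)ᴴ * (sB * sA)).trace = 0 := by
    have : ((sB * sA)ᴴ * (sB * sA)) = sA * (sB * sB) * sA := by
      rw [Matrix.conjTranspose_mul, hAh, hBh]
      noncomm_ring
    rw [this, hBeq]
    calc (sA * B * sA).trace = (sA * (B * sA)).trace := by rw [Matrix.mul_assoc]
      _ = ((B * sA) * sA).trace := Matrix.trace_mul_comm _ _
      _ = (B * A).trace := by rw [Matrix.mul_assoc, hAeq]
      _ = (A * B).trace := Matrix.trace_mul_comm _ _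
      _ = 0 := h
  have hBA0 : sB * sA = 0 := eq_zero_of_trace_conjTranspose_mul_self key
  have hBA : B * A = 0 := by
    rw [← hBeq, ← hAeq]
    calc sB * sB * (sA * sA) = sB * (sB * sA) * sA := by noncomm_ring
      _ = 0 := by rw [hBA0]; simp
  refine ⟨?_, hBA⟩
  have := congrArg Matrix.conjTranspose hBA
  simpa [Matrix.conjTranspose_mul, hA.isHermitian.eq, hB.isHermitian.eq] using this

/-- Complementary slackness: if `z` minimizes `Tr(z)` subject to `z ⪰ a_i`, the POVM
`(t_i)` maximizes `Σ_i Tr(a_i t_i)`, and the optimal values coincide, then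
`t_i z = t_i a_i`, `z t_i = a_i t_i` for all `i`, and `z = Σ_i t_i a_i = Σ_i a_i t_i`. -/
theorem stmt6 (d n : ℕ) (a : Fin n → Matrix (Fin d) (Fin d) ℂ)
    (ha : ∀ i, (a i).PosSemidef)
    (z : Matrix (Fin d) (Fin d) ℂ) (t : Fin n → Matrix (Fin d) (Fin d) ℂ)
    (hz_feas : ∀ i, (z - a i).PosSemidef)
    (hz_min : ∀ z' : Matrix (Fin d) (Fin d) ℂ,
      (∀ i, (z' - a i).PosSemidef) → (z.trace).re ≤ (z'.trace).re)
    (ht_pos : ∀ i, (t i).PosSemidef) (ht_sum : ∑ i, t i = 1)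
    (ht_max : ∀ s : Fin n → Matrix (Fin d) (Fin d) ℂ,
      (∀ i, (s i).PosSemidef) → (∑ i, s i = 1) →
        (∑ i, (a i * s i).trace).re ≤ (∑ i, (a i * t i).trace).re)
    (heq : z.trace = ∑ i, (a i * t i).trace) :
    (∀ i, t i * z = t i * a i) ∧ (∀ i, z * t i = a i * t i) ∧
      z = ∑ i, t i * a i ∧ z = ∑ i, a i * t i := by
  -- The sum of traces of (z - a i) * t i is zero
  have hsum0 : ∑ i, ((z - a i) * t i).trace = 0 := by
    have h1 : ∑ i, ((z - a i) * t i).trace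
        = (z * ∑ i, t i).trace - ∑ i, (a i * t i).trace := by
      rw [Matrix.mul_sum, Matrix.trace_sum, ← Finset.sum_sub_distrib]
      refine Finset.sum_congr rfl fun i _ => ?_
      rw [Matrix.sub_mul, Matrix.trace_sub]
    rw [h1, ht_sum, mul_one, heq, sub_self]
  -- Each summand is nonneg
  have hnn : ∀ i ∈ Finset.univ, (0:ℂ) ≤ ((z - a i) * t i).trace := by
    intro i _
    set w := CFC.sqrt (z - a i) with hsq
    have hseq : w * w = z - a i := CFC.sqrt_mul_sqrt_self (z - a i) (hz_feas i).nonneg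
    have hsh : Matrix.conjTranspose w = w := (Matrix.nonneg_iff_posSemidef.mp (CFC.sqrt_nonneg (z - a i))).isHermitian.eq
    have hpsd : (w * t i * w).PosSemidef := by
      have := (ht_pos i).mul_mul_conjTranspose_same w
      rwa [hsh] at this
    have : ((z - a i) * t i).trace = (w * t i * w).trace := by
      rw [← hseq]
      calc (w * w * t i).trace = (w * (w * t i)).trace := by rw [Matrix.mul_assoc]
        _ = ((w * t i) * w).trace := Matrix.trace_mul_comm _ _
    rw [this]
    exact trace_nonneg_of_psd hpsd
  have hterm0 : ∀ i, ((z - a i) * t i).trace = 0 := fun i =>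
    (Finset.sum_eq_zero_iff_of_nonneg hnn).mp hsum0 i (Finset.mem_univ i)
  -- hence (z - a i) * t i = 0 and t i * (z - a i) = 0
  have hmul0 : ∀ i, (z - a i) * t i = 0 ∧ t i * (z - a i) = 0 := fun i =>
    mul_eq_zero_of_psd_trace (hz_feas i) (ht_pos i) (hterm0 i)
  have h1 : ∀ i, t i * z = t i * a i := by
    intro i
    have := (hmul0 i).2
    rw [Matrix.mul_sub, sub_eq_zero] at this
    exact this
  have h2 : ∀ i, z * t i = a i * t i := by
    intro i
    have := (hmul0 i).1
    rw [Matrix.sub_mul, sub_eq_zero] at this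
    exact this
  refine ⟨h1, h2, ?_, ?_⟩
  · calc z = (∑ i, t i) * z := by rw [ht_sum, one_mul]
      _ = ∑ i, t i * z := by rw [Matrix.sum_mul]
      _ = ∑ i, t i * a i := Finset.sum_congr rfl fun i _ => h1 i
  · calc z = z * (∑ i, t i) := by rw [ht_sum, mul_one]
      _ = ∑ i, z * t i := by rw [Matrix.mul_sum]
      _ = ∑ i, a i * t i := Finset.sum_congr rfl fun i _ => h2 i
end
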